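/- arXiv:2307.08001 — 2 statements merged into one kernel-verified Lean document; each statement's English description precedes it below -/
import Mathlib

section
/- Let u_n < 0, A > 0, k₀ > 0, b > 0, and let 0 < α₂ < α₁ ≤ 1. Let x₁*, x₂* ∈ (0, 1/b) satisfy k₀·u_n·ω(b·xⱼ*, αⱼ) - b·xⱼ* + A = 0 for j = 1,2 (steady states at rationality α₁ and α₂ respectively). If b·x₁* ≤ 1/e, then x₁* ≥ x₂*; if b·x₁* ≥ 1/e, then x₁* ≤ x₂*. -/
open Real

noncomputable def prelec (p α : ℝ) : ℝ := Real.exp (-(-Real.log p) ^ α)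

lemma prelec_strictMono {p q α : ℝ} (hp : 0 < p) (hq : q < 1) (hpq : p < q)
    (hα : 0 < α) : prelec p α < prelec q α := by
  unfold prelec
  apply Real.exp_lt_exp.mpr
  have hlq : 0 < -Real.log q := by
    have := Real.log_neg (lt_trans hp hpq) hq
    linarith
  have hlpq : -Real.log q < -Real.log p := by
    have := Real.log_lt_log hp hpq
    linarith
  have := Real.rpow_lt_rpow (le_of_lt hlq) hlpq hα
  linarith

lemma prelec_le_small {p α₁ α₂ : ℝ} (hp : 0 < p) (hple : p ≤ (Real.exp 1)⁻¹)
    (h21 : α₂ ≤ α₁) : prelec p α₁ ≤ prelec p α₂ := by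
  unfold prelec
  apply Real.exp_le_exp.mpr
  have h1 : Real.log p ≤ -1 := by
    calc Real.log p ≤ Real.log (Real.exp 1)⁻¹ := Real.log_le_log hp hple
    _ = -1 := by rw [Real.log_inv, Real.log_exp]
  have : (1:ℝ) ≤ -Real.log p := by linarith
  have := Real.rpow_le_rpow_of_exponent_le this h21
  linarith

lemma prelec_le_big {p α₁ α₂ : ℝ} (hp : (Real.exp 1)⁻¹ ≤ p) (hp1 : p < 1)
    (h2 : 0 < α₂) (h21 : α₂ ≤ α₁) : prelec p α₂ ≤ prelec p α₁ := by
  unfold prelec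
  apply Real.exp_le_exp.mpr
  have hp0 : 0 < p := lt_of_lt_of_le (inv_pos.mpr (Real.exp_pos 1)) hp
  have h1 : -1 ≤ Real.log p := by
    calc (-1:ℝ) = Real.log (Real.exp 1)⁻¹ := by rw [Real.log_inv, Real.log_exp]
    _ ≤ Real.log p := Real.log_le_log (inv_pos.mpr (Real.exp_pos 1)) hp
  have hlt : Real.log p < 0 := Real.log_neg hp0 hp1
  have hx0 : 0 < -Real.log p := by linarith
  have hx1 : -Real.log p ≤ 1 := by linarith
  have := Real.rpow_le_rpow_of_exponent_ge hx0 hx1 h21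
  linarith

/-- comparison of interior steady states at two rationality
coefficients 0 < α₂ < α₁ ≤ 1: if the steady-state risk b·x₁* is at most 1/e
then x₁* ≥ x₂*, and if it is at least 1/e then x₁* ≤ x₂*. -/
theorem steady_state_comparison (un A k₀ b α₁ α₂ x₁ x₂ : ℝ)
    (hun : un < 0) (hA : 0 < A) (hk₀ : 0 < k₀) (hb : 0 < b)
    (h2 : 0 < α₂) (h21 : α₂ < α₁) (h1 : α₁ ≤ 1)
    (hx₁ : x₁ ∈ Set.Ioo 0 (1 / b)) (hx₂ : x₂ ∈ Set.Ioo 0 (1 / b))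
    (hroot₁ : k₀ * un * prelec (b * x₁) α₁ - b * x₁ + A = 0)
    (hroot₂ : k₀ * un * prelec (b * x₂) α₂ - b * x₂ + A = 0) :
    (b * x₁ ≤ (Real.exp 1)⁻¹ → x₁ ≥ x₂) ∧
    (b * x₁ ≥ (Real.exp 1)⁻¹ → x₁ ≤ x₂) := by
  obtain ⟨hx₁0, hx₁1⟩ := hx₁
  obtain ⟨hx₂0, hx₂1⟩ := hx₂
  have hb1 : 0 < b * x₁ := mul_pos hb hx₁0
  have hb2 : 0 < b * x₂ := mul_pos hb hx₂0
  have hb1' : b * x₁ < 1 := by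
    have := (mul_lt_mul_iff_right₀ hb).mpr hx₁1
    rwa [mul_one_div, div_self hb.ne'] at this
  have hb2' : b * x₂ < 1 := by
    have := (mul_lt_mul_iff_right₀ hb).mpr hx₂1
    rwa [mul_one_div, div_self hb.ne'] at this
  have hkun : k₀ * un < 0 := mul_neg_of_pos_of_neg hk₀ hun
  constructor
  · intro hle
    by_contra hcon
    push_neg at hcon
    -- x₁ < x₂
    have hbxlt : b * x₁ < b * x₂ := (mul_lt_mul_iff_right₀ hb).mpr hcon
    have hpre : prelec (b * x₁) α₂ < prelec (b * x₂) α₂ :=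
      prelec_strictMono hb1 hb2' hbxlt h2
    have hcmp : prelec (b * x₁) α₁ ≤ prelec (b * x₁) α₂ :=
      prelec_le_small hb1 hle (le_of_lt h21)
    nlinarith
  · intro hge
    by_contra hcon
    push_neg at hcon
    -- x₂ < x₁
    have hbxlt : b * x₂ < b * x₁ := (mul_lt_mul_iff_right₀ hb).mpr hcon
    have hpre : prelec (b * x₂) α₂ < prelec (b * x₁) α₂ :=
      prelec_strictMono hb2 hb1' hbxlt h2
    have hcmp : prelec (b * x₁) α₂ ≤ prelec (b * x₁) α₁ :=
      prelec_le_big hge hb1' h2 (le_of_lt h21)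
    nlinarith
end

section
/- Consider the same planar EUT system. At the equilibrium (i,x) = (0,1), the Jacobian has trace P = -(γ - k̄β₁) - k₀(u₁-u₂) and determinant Q = k₀(γ - k̄β₁)(u₁-u₂). If k̄β₁ < γ then P < 0 and Q > 0 (so (0,1) is asymptotically stable), and if k̄β₁ > γ then Q < 0 (so (0,1) is unstable). -/
/-- for the EUT epidemic-behavior system, at the equilibrium
(0,1) the Jacobian has trace P = -(γ-k̄β₁) - k₀(u₁-u₂) and determinant
Q = k₀(γ-k̄β₁)(u₁-u₂); if k̄β₁ < γ then P < 0 and Q > 0 (asymptotic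
stability), and if k̄β₁ > γ then Q < 0 (instability). -/
theorem equilibrium_zero_one (β₁ k γ k₀ u₁ u₂ un : ℝ)
    (hβ : 0 < β₁) (hk : 0 < k) (hγ : 0 < γ) (hk₀ : 0 < k₀)
    (hu : u₁ > u₂) (hun : un < 0)
    (F₁ F₂ : ℝ → ℝ → ℝ)
    (hF₁ : ∀ i x, F₁ i x = β₁ * k * i * x * (1 - i) - γ * i)
    (hF₂ : ∀ i x, F₂ i x = -β₁ * k * x * (1 - x) * i +
      k₀ * x * (1 - x) * (u₁ + un * β₁ * k * i - u₂)) :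
    (deriv (fun i => F₁ i 1) 0) + (deriv (fun x => F₂ 0 x) 1) =
      -(γ - k * β₁) - k₀ * (u₁ - u₂) ∧
    (deriv (fun i => F₁ i 1) 0) * (deriv (fun x => F₂ 0 x) 1) -
      (deriv (fun x => F₁ 0 x) 1) * (deriv (fun i => F₂ i 1) 0) =
        k₀ * (γ - k * β₁) * (u₁ - u₂) ∧
    (k * β₁ < γ →
      -(γ - k * β₁) - k₀ * (u₁ - u₂) < 0 ∧
      0 < k₀ * (γ - k * β₁) * (u₁ - u₂)) ∧
    (γ < k * β₁ → k₀ * (γ - k * β₁) * (u₁ - u₂) < 0) := by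
  have e1 : (fun i => F₁ i 1) = fun i : ℝ => β₁ * k * (i - i ^ 2) - γ * i := by
    funext i; rw [hF₁]; ring
  have e2 : (fun x => F₂ 0 x) = fun x : ℝ => k₀ * (u₁ - u₂) * (x - x ^ 2) := by
    funext x; rw [hF₂]; ring
  have e3 : (fun x => F₁ 0 x) = fun _ : ℝ => (0 : ℝ) := by
    funext x; rw [hF₁]; ring
  have e4 : (fun i => F₂ i 1) = fun _ : ℝ => (0 : ℝ) := by
    funext i; rw [hF₂]; ring
  have d1 : deriv (fun i => F₁ i 1) 0 = β₁ * k - γ := by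
    rw [e1]
    have h : HasDerivAt (fun i : ℝ => β₁ * k * (i - i ^ 2) - γ * i)
        (β₁ * k * (1 - 2 * 0 ^ 1) - γ * 1) 0 :=
      (((hasDerivAt_id 0).sub (hasDerivAt_pow 2 0)).const_mul (β₁ * k)).sub
        ((hasDerivAt_id 0).const_mul γ)
    rw [h.deriv]; ring
  have d2 : deriv (fun x => F₂ 0 x) 1 = -(k₀ * (u₁ - u₂)) := by
    rw [e2]
    have h : HasDerivAt (fun x : ℝ => k₀ * (u₁ - u₂) * (x - x ^ 2))
        (k₀ * (u₁ - u₂) * (1 - 2 * 1 ^ 1)) 1 :=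
      ((hasDerivAt_id 1).sub (hasDerivAt_pow 2 1)).const_mul (k₀ * (u₁ - u₂))
    rw [h.deriv]; ring
  have d3 : deriv (fun x => F₁ 0 x) 1 = 0 := by rw [e3]; simp
  have d4 : deriv (fun i => F₂ i 1) 0 = 0 := by rw [e4]; simp
  rw [d1, d2, d3, d4]
  refine ⟨by ring, by ring, fun h => ⟨by nlinarith, by nlinarith [mul_pos (mul_pos hk₀ (sub_pos.2 h)) (sub_pos.2 hu)]⟩,
    fun h => by nlinarith [mul_pos (mul_pos hk₀ (sub_pos.2 h)) (sub_pos.2 hu)]⟩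
end
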